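/- arXiv:1212.3471 — 3 statements merged into one kernel-verified Lean document; each statement's English description precedes it below -/
import Mathlib

section
/- Let T be a finite tree with nonnegative real edge weights, rooted at r, let P be a finite multiset of vertices of T partitioned into multisets A and B, and let v be a vertex. Then the within-subtree contribution Σ_{e edge of T_v} w(e)·cross_e(A,B) equals Σ_{(a,b)∈A_v×B_v} d(a,b) + (|B| − |B_v|)·Σ_{a∈A_v} d(a,v) + (|A| − |A_v|)·Σ_{b∈B_v} d(b,v), where A_v, B_v are the restrictions of A, B to the vertices of T_v and all sums over multisets count multiplicity. -/
/-!
Exchanging the two sums, the left-hand side is `∑_{(a,b) ∈ A × B}` of the weight of the part of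
the `a`–`b` path that lies in `T_v`. The subtree `T_v` is convex and meets the rest of the tree
only through `v`, so this part is the path between the projections of `a` and `b` to `T_v`, where
the projection fixes `T_v` and sends every other vertex to `v`. Its length is therefore
`d(a,b)`, `d(a,v)`, `d(v,b)` or `0` according to which of `a`, `b` lie in `T_v`, and summing
over the four blocks of `A × B` gives the formula.
-/

open SimpleGraph

lemma Multiset.sum_map_ite_eq_mul_card_filter {β R : Type*} [Semiring R] (M : Multiset β)
    (p : β → Prop) [DecidablePred p] (c : R) :
    (M.map fun m => if p m then c else 0).sum = c * ((M.filter p).card : R) := by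
  induction M using Multiset.induction_on with
  | empty => simp
  | cons a M ih => by_cases h : p a <;> simp [h, ih, mul_add, add_comm]

lemma Finset.sum_mul_card_filter_eq {α β R : Type*} [Semiring R] (s : Finset α) (M : Multiset β)
    (rel : α → β → Prop) [∀ a b, Decidable (rel a b)] (w : α → R) :
    ∑ e ∈ s, w e * ((M.filter (rel e)).card : R) =
      (M.map fun m => ∑ e ∈ s with rel e m, w e).sum := by
  simp_rw [Finset.sum_filter, Multiset.sum_map_sum, Multiset.sum_map_ite_eq_mul_card_filter]

lemma Multiset.sum_map_product {α β M : Type*} [AddCommMonoid M] (A : Multiset α)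
    (B : Multiset β) (f : α × β → M) :
    ((A ×ˢ B).map f).sum = (A.map fun a => (B.map fun b => f (a, b)).sum).sum := by
  induction A using Multiset.induction <;> simp_all

lemma Multiset.map_ite_eq_filter_add_replicate {α : Type*} (p : α → Prop) [DecidablePred p]
    (c : α) (M : Multiset α) :
    M.map (fun x => if p x then x else c) = M.filter p + replicate (M.filter (¬ p ·)).card c := by
  conv_lhs => rw [← filter_add_not p M, map_add]
  congr 1
  · exact (map_congr rfl fun x hx => if_pos (mem_filter.1 hx).2).trans (map_id _)
  · exact (map_congr rfl fun x hx => if_neg (mem_filter.1 hx).2).trans (map_const' _ _)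

lemma Multiset.sum_map_product_ite {α R : Type*} [CommRing R] (p : α → Prop) [DecidablePred p]
    (c : α) (f : α → α → R) (hcc : f c c = 0) (hc : ∀ x, f c x = f x c) (A B : Multiset α) :
    ((A ×ˢ B).map fun ab => f (if p ab.1 then ab.1 else c) (if p ab.2 then ab.2 else c)).sum =
      ((A.filter p ×ˢ B.filter p).map fun ab => f ab.1 ab.2).sum +
      ((B.card : R) - (B.filter p).card) * ((A.filter p).map fun a => f a c).sum +
      ((A.card : R) - (A.filter p).card) * ((B.filter p).map fun b => f b c).sum := by
  have hcard (M : Multiset α) : (M.card : R) - (M.filter p).card = (M.filter (¬ p ·)).card := by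
    rw [sub_eq_iff_eq_add', ← Nat.cast_add, ← card_add, filter_add_not]
  have hproj :
      ((A ×ˢ B).map fun ab => f (if p ab.1 then ab.1 else c) (if p ab.2 then ab.2 else c)).sum =
        ((A.map fun x => if p x then x else c).map
          fun a => ((B.map fun x => if p x then x else c).map (f a)).sum).sum := by
    simp only [sum_map_product, map_map, Function.comp_def]
  rw [hproj, map_ite_eq_filter_add_replicate, map_ite_eq_filter_add_replicate]
  simp only [sum_map_product, map_add, sum_add, map_replicate, sum_replicate, sum_map_add,
    hcc, hc, hcard, nsmul_eq_mul, sum_map_mul_left]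
  ring

namespace SimpleGraph

/-- The vertex of the subtree `T_v` nearest to `x`. -/
def subtreeProj {V : Type*} [DecidableEq V] {G : SimpleGraph V} (pth : ∀ u v : V, G.Walk u v)
    (r v x : V) : V :=
  if v ∈ (pth x r).support then x else v

end SimpleGraph

namespace SimpleGraph.IsAcyclic

variable {V : Type*} {G : SimpleGraph V} (hG : G.IsAcyclic)
  {pth : ∀ u v : V, G.Walk u v} (hpth : ∀ u v, (pth u v).IsPath)
include hG hpth

lemma eq_pth_of_isPath {u v : V} {p : G.Walk u v} (hp : p.IsPath) : p = pth u v :=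
  congrArg Subtype.val <| (hG.subsingleton_path u v).elim ⟨p, hp⟩ ⟨_, hpth u v⟩

lemma pth_swap (x y : V) : pth y x = (pth x y).reverse :=
  (hG.eq_pth_of_isPath hpth (hpth x y).reverse).symm

lemma mem_edges_pth_comm {x y : V} {e : Sym2 V} :
    e ∈ (pth x y).edges ↔ e ∈ (pth y x).edges := by
  rw [hG.pth_swap hpth x y, Walk.edges_reverse, List.mem_reverse]

lemma sum_map_edges_pth_comm (w : Sym2 V → ℝ) (x y : V) :
    ((pth x y).edges.map w).sum = ((pth y x).edges.map w).sum := by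
  rw [hG.pth_swap hpth x y, Walk.edges_reverse, List.map_reverse, List.sum_reverse]

lemma mem_support_pth_comm {x y u : V} :
    u ∈ (pth x y).support ↔ u ∈ (pth y x).support := by
  rw [hG.pth_swap hpth x y, Walk.support_reverse, List.mem_reverse]

variable [DecidableEq V]

lemma pth_eq_append {x y z : V} (hz : z ∈ (pth x y).support) :
    pth x y = (pth x z).append (pth z y) := by
  rw [← hG.eq_pth_of_isPath hpth ((hpth x y).takeUntil hz),
    ← hG.eq_pth_of_isPath hpth ((hpth x y).dropUntil hz), Walk.take_spec]

lemma mem_support_pth_or {x y z u : V} (hu : u ∈ (pth x z).support) :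
    u ∈ (pth x y).support ∨ u ∈ (pth y z).support := by
  rw [← hG.eq_pth_of_isPath hpth ((pth x y).append (pth y z)).bypass_isPath] at hu
  exact (Walk.mem_support_append_iff _ _).mp (Walk.support_bypass_subset_support _ hu)

lemma eq_of_mem_support_pth_of_mem_support_pth {a b z u : V} (hz : z ∈ (pth a b).support)
    (h₁ : u ∈ (pth a z).support) (h₂ : u ∈ (pth z b).support) : u = z := by
  by_contra hne
  have hpath := hpth a b
  rw [hG.pth_eq_append hpth hz] at hpath
  exact hpath.ne_of_mem_support_of_append hne h₁ h₂ rfl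

variable (r v : V)

lemma mem_support_pth_of_subtree_of_not_subtree {x y : V} (hx : v ∈ (pth x r).support)
    (hy : v ∉ (pth y r).support) : v ∈ (pth x y).support :=
  (hG.mem_support_pth_or hpth hx).resolve_right hy

lemma subtree_of_mem_support_pth {a b x : V} (ha : v ∈ (pth a r).support)
    (hb : v ∈ (pth b r).support) (hx : x ∈ (pth a b).support) : v ∈ (pth x r).support := by
  by_contra hxr
  have hvx := hG.eq_of_mem_support_pth_of_mem_support_pth hpth hx
    (hG.mem_support_pth_of_subtree_of_not_subtree hpth r v ha hxr)
    ((hG.mem_support_pth_comm hpth).mp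
      (hG.mem_support_pth_of_subtree_of_not_subtree hpth r v hb hxr))
  exact hxr (hvx ▸ (pth v r).start_mem_support)

lemma not_subtree_of_mem_support_pth {a b x : V} (ha : v ∉ (pth a r).support)
    (hb : v ∉ (pth b r).support) (hx : x ∈ (pth a b).support) : v ∉ (pth x r).support := by
  have not_subtree {y : V} (hy : v ∉ (pth y r).support) (hxy : x ∈ (pth y r).support) :
      v ∉ (pth x r).support := fun hv ↦ hy <| by
    rw [hG.pth_eq_append hpth hxy, Walk.mem_support_append_iff]
    exact Or.inr hv
  rcases hG.mem_support_pth_or hpth (y := r) hx with h | h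
  · exact not_subtree ha h
  · exact not_subtree hb ((hG.mem_support_pth_comm hpth).mp h)

lemma eq_of_subtree_of_mem_support_pth {b x : V} (hb : v ∉ (pth b r).support)
    (hx : x ∈ (pth v b).support) (hxr : v ∈ (pth x r).support) : x = v :=
  (hG.eq_of_mem_support_pth_of_mem_support_pth hpth hx (pth v x).start_mem_support
    (hG.mem_support_pth_of_subtree_of_not_subtree hpth r v hxr hb)).symm

omit hG hpth in
lemma subtreeProj_mem_subtree (x : V) : v ∈ (pth (subtreeProj pth r v x) r).support := by
  unfold subtreeProj
  by_cases h : v ∈ (pth x r).support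
  · rwa [if_pos h]
  · rw [if_neg h]
    exact (pth v r).start_mem_support

lemma notMem_edges_pth_of_not_subtree {b : V} (hb : v ∉ (pth b r).support) {e : Sym2 V}
    (he : ∀ x ∈ e, v ∈ (pth x r).support) : e ∉ (pth v b).edges := by
  intro hmem
  have hv (x : V) (hx : x ∈ e) : x = v := hG.eq_of_subtree_of_mem_support_pth hpth r v hb
    (Walk.mem_support_of_mem_edges hmem hx) (he x hx)
  refine G.not_isDiag_of_mem_edgeSet ((pth v b).edges_subset_edgeSet hmem) ?_
  induction e with
  | _ x y => rw [Sym2.mk_isDiag_iff, hv x (Sym2.mem_mk_left x y), hv y (Sym2.mem_mk_right x y)]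

lemma mem_edges_pth_iff_of_not_subtree {a b : V} (ha : v ∈ (pth a r).support)
    (hb : v ∉ (pth b r).support) {e : Sym2 V} (he : ∀ x ∈ e, v ∈ (pth x r).support) :
    e ∈ (pth a b).edges ↔ e ∈ (pth a v).edges := by
  rw [hG.pth_eq_append hpth (hG.mem_support_pth_of_subtree_of_not_subtree hpth r v ha hb),
    Walk.edges_append, List.mem_append,
    or_iff_left (hG.notMem_edges_pth_of_not_subtree hpth r v hb he)]

lemma mem_edges_pth_iff_subtreeProj (a b : V) {e : Sym2 V}
    (he : ∀ x ∈ e, v ∈ (pth x r).support) :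
    e ∈ (pth a b).edges ↔ e ∈ (pth (subtreeProj pth r v a) (subtreeProj pth r v b)).edges := by
  unfold subtreeProj
  by_cases ha : v ∈ (pth a r).support <;> by_cases hb : v ∈ (pth b r).support
  · rw [if_pos ha, if_pos hb]
  · rw [if_pos ha, if_neg hb]
    exact hG.mem_edges_pth_iff_of_not_subtree hpth r v ha hb he
  · rw [if_neg ha, if_pos hb, hG.mem_edges_pth_comm hpth,
      hG.mem_edges_pth_iff_of_not_subtree hpth r v hb ha he, hG.mem_edges_pth_comm hpth]
  · rw [if_neg ha, if_neg hb, ← hG.eq_pth_of_isPath hpth (Walk.IsPath.nil (u := v)), Walk.edges_nil,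
      List.mem_nil_iff, iff_false]
    intro hmem
    exact hG.not_subtree_of_mem_support_pth hpth r v ha hb
      (Walk.mem_support_of_mem_edges hmem e.out_fst_mem) (he _ e.out_fst_mem)

lemma sum_subtree_edges_pth [Fintype G.edgeSet]
    [DecidablePred fun e : Sym2 V => ∀ x ∈ e, v ∈ (pth x r).support] (w : Sym2 V → ℝ) (a b : V) :
    ∑ e ∈ G.edgeFinset.filter (fun e => ∀ x ∈ e, v ∈ (pth x r).support) with
        e ∈ (pth a b).edges, w e =
      ((pth (subtreeProj pth r v a) (subtreeProj pth r v b)).edges.map w).sum := by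
  rw [← List.sum_toFinset _ (hpth _ _).edges_nodup]
  congr 1
  ext e
  simp only [Finset.mem_filter, List.mem_toFinset]
  constructor
  · rintro ⟨⟨-, he⟩, hmem⟩
    exact (hG.mem_edges_pth_iff_subtreeProj hpth r v a b he).mp hmem
  · intro hmem
    have he (x : V) (hx : x ∈ e) : v ∈ (pth x r).support :=
      hG.subtree_of_mem_support_pth hpth r v (subtreeProj_mem_subtree r v a)
        (subtreeProj_mem_subtree r v b) (Walk.mem_support_of_mem_edges hmem hx)
    exact ⟨⟨mem_edgeFinset.mpr ((pth _ _).edges_subset_edgeSet hmem), he⟩,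
      (hG.mem_edges_pth_iff_subtreeProj hpth r v a b he).mpr hmem⟩

end SimpleGraph.IsAcyclic

open Classical in
theorem statement2_general
    {V : Type} [Fintype V] [DecidableEq V]
    (G : SimpleGraph V) [Fintype G.edgeSet] (hT : G.IsTree)
    (w : Sym2 V → ℝ)
    (pth : ∀ u v : V, G.Walk u v) (hpth : ∀ u v, (pth u v).IsPath)
    (d : V → V → ℝ) (hd : ∀ u v, d u v = ((pth u v).edges.map w).sum)
    (r v : V) (A B : Multiset V) :
    ∑ e ∈ G.edgeFinset.filter (fun e => ∀ x ∈ e, v ∈ (pth x r).support),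
        w e * (((A ×ˢ B).filter fun ab => e ∈ (pth ab.1 ab.2).edges).card : ℝ) =
      (((A.filter fun x => v ∈ (pth x r).support) ×ˢ
          (B.filter fun x => v ∈ (pth x r).support)).map fun ab => d ab.1 ab.2).sum +
      ((B.card : ℝ) - (B.filter fun x => v ∈ (pth x r).support).card) *
        ((A.filter fun x => v ∈ (pth x r).support).map fun a => d a v).sum +
      ((A.card : ℝ) - (A.filter fun x => v ∈ (pth x r).support).card) *
        ((B.filter fun x => v ∈ (pth x r).support).map fun b => d b v).sum := by
  have hG := hT.isAcyclic
  have hcomm (x : V) : d v x = d x v := by rw [hd, hd, hG.sum_map_edges_pth_comm hpth]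
  have hself : d v v = 0 := by rw [hd, ← hG.eq_pth_of_isPath hpth (Walk.IsPath.nil (u := v))]; rfl
  rw [Finset.sum_mul_card_filter_eq]
  simp_rw [hG.sum_subtree_edges_pth hpth r v w, ← hd]
  exact Multiset.sum_map_product_ite (fun x => v ∈ (pth x r).support) v d hself hcomm A B

open Classical in
/-- In a finite tree `G` rooted at `r` with nonnegative edge
weights `w`, for a vertex `v`, the within-subtree contribution
`Σ_{e edge of T_v} w(e)·cross_e(A,B)` (summing over edges of `G` with both
endpoints in the subtree `T_v`) equals
`Σ_{(a,b)∈A_v×B_v} d(a,b) + (|B| − |B_v|)·Σ_{a∈A_v} d(a,v) +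
(|A| − |A_v|)·Σ_{b∈B_v} d(b,v)`, where `M_v` is the restriction of `M` to the
vertices of `T_v` (those whose path to `r` passes through `v`). -/
theorem statement2
    {V : Type} [Fintype V] [DecidableEq V]
    (G : SimpleGraph V) [Fintype G.edgeSet] (hT : G.IsTree)
    (w : Sym2 V → ℝ) (hw : ∀ e, 0 ≤ w e)
    (pth : ∀ u v : V, G.Walk u v) (hpth : ∀ u v, (pth u v).IsPath)
    (d : V → V → ℝ) (hd : ∀ u v, d u v = ((pth u v).edges.map w).sum)
    (r v : V) (P A B : Multiset V) (hP : A + B = P) :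
    ∑ e ∈ G.edgeFinset.filter (fun e => ∀ x ∈ e, v ∈ (pth x r).support),
        w e * (((A ×ˢ B).filter fun ab => e ∈ (pth ab.1 ab.2).edges).card : ℝ) =
      (((A.filter fun x => v ∈ (pth x r).support) ×ˢ
          (B.filter fun x => v ∈ (pth x r).support)).map fun ab => d ab.1 ab.2).sum +
      ((B.card : ℝ) - (B.filter fun x => v ∈ (pth x r).support).card) *
        ((A.filter fun x => v ∈ (pth x r).support).map fun a => d a v).sum +
      ((A.card : ℝ) - (A.filter fun x => v ∈ (pth x r).support).card) *
        ((B.filter fun x => v ∈ (pth x r).support).map fun b => d b v).sum :=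
  statement2_general G hT w pth hpth d hd r v A B
end

section
/- Let T be a finite tree with nonnegative real edge weights, rooted at r, let P be a finite multiset of vertices of T, and let v be a vertex. If (A,B) and (A',B') are two partitions of P into multisets such that A restricted to the vertices of T_v equals A' restricted to the vertices of T_v, B restricted to T_v equals B' restricted to T_v, |A| = |A'|, and |B| = |B'|, then Σ_{e edge of T_v} w(e)·cross_e(A,B) = Σ_{e edge of T_v} w(e)·cross_e(A',B'). That is, the total weight of the fragments of connecting paths contained within T_v depends only on the partition of P_v and on the numbers of elements of P outside T_v in each side. -/
/-!
Fix an edge `e` of `T_v` and call a vertex *below* `e` if its path to `r` uses `e`. Since `e` is a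
bridge, `T - e` has two components, and a path `a ⟶ b` uses `e` exactly when one of `a`, `b` is
below `e` and the other is not. Hence `cross_e(A, B) = |A_e| |B \ B_e| + |A \ A_e| |B_e|`, where
`X_e` collects the elements of `X` below `e`. Every vertex below `e` lies in `T_v`, so
`A_e = A'_e` and `B_e = B'_e`, and the complements have equal sizes because `|A| = |A'|`,
`|B| = |B'|`.
-/

namespace Multiset

variable {α : Type*} (p : α → Prop) [DecidablePred p]

theorem card_filter_product_not_iff (s t : Multiset α) :
    ((s ×ˢ t).filter fun ab => ¬(p ab.1 ↔ p ab.2)).card =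
      (s.filter p).card * (t.filter (¬p ·)).card +
        (s.filter (¬p ·)).card * (t.filter p).card := by
  induction s using Multiset.induction_on with
  | empty => simp
  | cons a s ih =>
    by_cases ha : p a <;>
      simp [cons_product, filter_map, ha, ih] <;> ring

theorem card_filter_not_eq_of_filter_eq {s t : Multiset α} (h : s.filter p = t.filter p)
    (hcard : s.card = t.card) : (s.filter (¬p ·)).card = (t.filter (¬p ·)).card := by
  have hs := congrArg card (filter_add_not p s)
  have ht := congrArg card (filter_add_not p t)
  rw [card_add, h] at hs
  rw [card_add] at ht
  omega

theorem filter_eq_filter_of_imp {q : α → Prop} [DecidablePred q] (hpq : ∀ a, p a → q a)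
    {s t : Multiset α} (h : s.filter q = t.filter q) : s.filter p = t.filter p := by
  have key : ∀ u : Multiset α, u.filter p = (u.filter q).filter p := fun u => by
    rw [filter_filter]; exact filter_congr fun a _ => ⟨fun ha => ⟨ha, hpq a ha⟩, And.left⟩
  rw [key s, h, ← key t]

end Multiset

namespace SimpleGraph

variable {V : Type*} {G : SimpleGraph V}

theorem Walk.IsTrail.mem_edges_iff_not_reachable_deleteEdges {x y u v : V} {p : G.Walk u v}
    (hp : p.IsTrail) (hb : G.IsBridge s(x, y)) :
    s(x, y) ∈ p.edges ↔ ¬(G.deleteEdges {s(x, y)}).Reachable u v := by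
  refine ⟨fun he huv => ?_, p.mem_edges_of_not_reachable_deleteEdges⟩
  have hxy : ¬(G.deleteEdges {s(x, y)}).Reachable x y := isBridge_iff.mp hb
  by_cases huy : (G.deleteEdges {s(x, y)}).Reachable u y
  · have hux : ¬(G.deleteEdges {s(x, y)}).Reachable u x := fun hux => hxy (hux.symm.trans huy)
    rw [Sym2.eq_swap] at he huv hux
    exact hp.not_mem_edges_of_not_reachable hux (fun hvx => hux (huv.trans hvx)) he
  · exact hp.not_mem_edges_of_not_reachable huy (fun hvy => huy (huv.trans hvy)) he

theorem IsBridge.reachable_deleteEdges_or (hG : G.Preconnected) {x y : V}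
    (hb : G.IsBridge s(x, y)) (u : V) :
    (G.deleteEdges {s(x, y)}).Reachable u x ∨ (G.deleteEdges {s(x, y)}).Reachable u y := by
  by_contra! h
  obtain ⟨p, hp⟩ := (hG u x).exists_isPath
  exact hp.isTrail.not_mem_edges_of_not_reachable h.2 (isBridge_iff.mp hb)
    (p.mem_edges_of_not_reachable_deleteEdges h.1)

theorem reachable_iff_of_forall_reachable_or {x y : V}
    (h : ∀ u, G.Reachable u x ∨ G.Reachable u y) (a b r : V) :
    G.Reachable a b ↔ (G.Reachable a r ↔ G.Reachable b r) := by
  simp only [← ConnectedComponent.eq] at h ⊢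
  rcases h a with ha | ha <;> rcases h b with hb | hb <;> rcases h r with hr | hr <;>
    grind

theorem IsBridge.mem_edges_iff_not_iff (hG : G.Preconnected) {e : Sym2 V} (hb : G.IsBridge e)
    {a b r : V} {p : G.Walk a b} {q : G.Walk a r} {q' : G.Walk b r}
    (hp : p.IsTrail) (hq : q.IsTrail) (hq' : q'.IsTrail) :
    e ∈ p.edges ↔ ¬(e ∈ q.edges ↔ e ∈ q'.edges) := by
  induction e using Sym2.ind
  rw [hp.mem_edges_iff_not_reachable_deleteEdges hb, hq.mem_edges_iff_not_reachable_deleteEdges hb,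
    hq'.mem_edges_iff_not_reachable_deleteEdges hb,
    reachable_iff_of_forall_reachable_or (hb.reachable_deleteEdges_or hG) a b r]
  tauto

theorem IsAcyclic.support_subset_of_mem_support (hG : G.IsAcyclic) {u x r : V}
    {p : G.Walk u r} {q : G.Walk x r} (hp : p.IsPath) (hq : q.IsPath) (hx : x ∈ p.support) :
    q.support ⊆ p.support := by
  classical
  have hdrop : p.dropUntil x hx = q :=
    congrArg Subtype.val <| (hG.subsingleton_path x r).elim ⟨_, hp.dropUntil hx⟩ ⟨q, hq⟩
  exact hdrop ▸ p.support_dropUntil_subset_support hx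

end SimpleGraph

open SimpleGraph Multiset

open Classical in
theorem statement3_general
    {V : Type} [Fintype V] [DecidableEq V]
    (G : SimpleGraph V) [Fintype G.edgeSet] (hT : G.IsTree)
    (w : Sym2 V → ℝ)
    (pth : ∀ u v : V, G.Walk u v) (hpth : ∀ u v, (pth u v).IsPath)
    (r v : V) (A B A' B' : Multiset V)
    (hA : A.filter (fun x => v ∈ (pth x r).support) =
          A'.filter (fun x => v ∈ (pth x r).support))
    (hB : B.filter (fun x => v ∈ (pth x r).support) =
          B'.filter (fun x => v ∈ (pth x r).support))
    (hcardA : A.card = A'.card) (hcardB : B.card = B'.card) :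
    ∑ e ∈ G.edgeFinset.filter (fun e => ∀ x ∈ e, v ∈ (pth x r).support),
        w e * (((A ×ˢ B).filter fun ab => e ∈ (pth ab.1 ab.2).edges).card : ℝ) =
    ∑ e ∈ G.edgeFinset.filter (fun e => ∀ x ∈ e, v ∈ (pth x r).support),
        w e * (((A' ×ˢ B').filter fun ab => e ∈ (pth ab.1 ab.2).edges).card : ℝ) := by
  refine Finset.sum_congr rfl fun e he => ?_
  obtain ⟨heG, hev⟩ := Finset.mem_filter.mp he
  set f : V → Prop := fun u => e ∈ (pth u r).edges
  have hb : G.IsBridge e := isAcyclic_iff_forall_isBridge.mp hT.isAcyclic (mem_edgeFinset.mp heG)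
  have hcross (a b : V) : e ∈ (pth a b).edges ↔ ¬(f a ↔ f b) :=
    hb.mem_edges_iff_not_iff hT.connected.preconnected
      (hpth a b).isTrail (hpth a r).isTrail (hpth b r).isTrail
  have hsub (u : V) (hu : f u) : v ∈ (pth u r).support := by
    obtain ⟨x, hx⟩ : ∃ x, x ∈ e := ⟨_, Sym2.out_fst_mem e⟩
    exact hT.isAcyclic.support_subset_of_mem_support (hpth u r) (hpth x r)
      (Walk.mem_support_of_mem_edges hu hx) (hev x hx)
  have hAf := filter_eq_filter_of_imp f hsub hA
  have hBf := filter_eq_filter_of_imp f hsub hB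
  simp only [filter_congr fun (ab : V × V) _ => hcross ab.1 ab.2, card_filter_product_not_iff,
    hAf, hBf, card_filter_not_eq_of_filter_eq f hAf hcardA,
    card_filter_not_eq_of_filter_eq f hBf hcardB]

open Classical in
/-- In a finite tree `G` rooted at `r` with nonnegative edge
weights, if two partitions `(A,B)` and `(A',B')` of the multiset `P` agree on
the subtree `T_v` (their restrictions to the vertices of `T_v` coincide) and
have the same cardinalities (`|A| = |A'|` and `|B| = |B'|`), then the total
weight of the fragments of connecting paths contained within `T_v`, i.e.
`Σ_{e edge of T_v} w(e)·cross_e(·,·)`, is the same for both partitions. -/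
theorem statement3
    {V : Type} [Fintype V] [DecidableEq V]
    (G : SimpleGraph V) [Fintype G.edgeSet] (hT : G.IsTree)
    (w : Sym2 V → ℝ) (hw : ∀ e, 0 ≤ w e)
    (pth : ∀ u v : V, G.Walk u v) (hpth : ∀ u v, (pth u v).IsPath)
    (r v : V) (P A B A' B' : Multiset V)
    (hP : A + B = P) (hP' : A' + B' = P)
    (hA : A.filter (fun x => v ∈ (pth x r).support) =
          A'.filter (fun x => v ∈ (pth x r).support))
    (hB : B.filter (fun x => v ∈ (pth x r).support) =
          B'.filter (fun x => v ∈ (pth x r).support))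
    (hcardA : A.card = A'.card) (hcardB : B.card = B'.card) :
    ∑ e ∈ G.edgeFinset.filter (fun e => ∀ x ∈ e, v ∈ (pth x r).support),
        w e * (((A ×ˢ B).filter fun ab => e ∈ (pth ab.1 ab.2).edges).card : ℝ) =
    ∑ e ∈ G.edgeFinset.filter (fun e => ∀ x ∈ e, v ∈ (pth x r).support),
        w e * (((A' ×ˢ B').filter fun ab => e ∈ (pth ab.1 ab.2).edges).card : ℝ) :=
  statement3_general G hT w pth hpth r v A B A' B' hA hB hcardA hcardB
end

section
/- Consider the multiset P = {0, 1, 2, 3} of points on the real line with distance |x − y|. The partition of P into A = {0, 3} and B = {1, 2} is a bisection with cut value 6, while every bisection (A', B') of P with max A' ≤ min B' (a single geometric cut) has cut value 8. Hence the minimum bisection value of P is strictly smaller than the value of every bisection induced by a single geometric cut; single geometric cuts are not always sufficient to generate minimum bisections on the real line. -/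
lemma counts (x : ℝ) : Multiset.count x ({0,1,2,3} : Multiset ℝ)
    = (if x = 0 then 1 else 0) + (if x = 1 then 1 else 0)
    + (if x = 2 then 1 else 0) + (if x = 3 then 1 else 0) := by
  simp [Multiset.insert_eq_cons, Multiset.count_cons, Multiset.count_singleton]
  ring

lemma geom_cut (A' B' : Multiset ℝ) (hsum : A' + B' = ({0, 1, 2, 3} : Multiset ℝ))
    (hcard : Multiset.card A' = Multiset.card B')
    (hle : ∀ a ∈ A', ∀ b ∈ B', a ≤ b) :
    A' = ({0,1} : Multiset ℝ) ∧ B' = ({2,3} : Multiset ℝ) := by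
  have hcardP : Multiset.card A' + Multiset.card B' = 4 := by
    have := congrArg Multiset.card hsum
    simpa using this
  have hA2 : Multiset.card A' = 2 := by omega
  have hmemP : ∀ x ∈ A', x = 0 ∨ x = 1 ∨ x = 2 ∨ x = 3 := by
    intro x hx
    have : x ∈ ({0,1,2,3} : Multiset ℝ) := hsum ▸ Multiset.mem_add.2 (Or.inl hx)
    simpa using this
  have hcount : ∀ x : ℝ, Multiset.count x A' + Multiset.count x B'
      = Multiset.count x ({0,1,2,3} : Multiset ℝ) := by
    intro x; rw [← Multiset.count_add, hsum]
  have hc0 : Multiset.count (0:ℝ) A' + Multiset.count (0:ℝ) B' = 1 := by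
    rw [hcount 0, counts]; norm_num
  have hc1 : Multiset.count (1:ℝ) A' + Multiset.count (1:ℝ) B' = 1 := by
    rw [hcount 1, counts]; norm_num
  -- 0 ∈ A'
  have h0A : (0:ℝ) ∈ A' := by
    by_contra h0
    have h0B : (0:ℝ) ∈ B' := by
      have : (0:ℝ) ∈ A' + B' := by rw [hsum]; simp
      rcases Multiset.mem_add.1 this with h | h
      · exact absurd h h0
      · exact h
    have hall : ∀ a ∈ A', a = (0:ℝ) := by
      intro a ha
      have h1 : a ≤ 0 := hle a ha 0 h0B
      rcases hmemP a ha with rfl | rfl | rfl | rfl <;> linarith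
    have : Multiset.count (0:ℝ) A' = 2 := by
      rw [← hA2]
      exact Multiset.count_eq_card.2 (fun a ha => (hall a ha).symm)
    have hb : 1 ≤ Multiset.count (0:ℝ) B' := Multiset.one_le_count_iff_mem.2 h0B
    omega
  -- 1 ∈ A'
  obtain ⟨C, hC⟩ := Multiset.exists_cons_of_mem h0A
  have hCcard : Multiset.card C = 1 := by
    have := hA2; rw [hC] at this; simpa using this
  obtain ⟨x, hx⟩ := Multiset.card_eq_one.1 hCcard
  have hxA : x ∈ A' := by rw [hC, hx]; simp
  have h1A : (1:ℝ) ∈ A' := by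
    by_contra h1
    have h1B : (1:ℝ) ∈ B' := by
      have : (1:ℝ) ∈ A' + B' := by rw [hsum]; simp
      rcases Multiset.mem_add.1 this with h | h
      · exact absurd h h1
      · exact h
    have hxle : x ≤ 1 := hle x hxA 1 h1B
    rcases hmemP x hxA with rfl | rfl | rfl | rfl
    · -- x = 0: count 0 in A' is 2
      have : Multiset.count (0:ℝ) A' = 2 := by
        rw [hC, hx]; simp
      omega
    · exact h1 hxA
    · linarith
    · linarith
  have hAeq : A' = ({0,1} : Multiset ℝ) := by
    have hx1 : x = 1 := by
      rcases Multiset.mem_cons.1 (hC ▸ h1A) with h | h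
      · norm_num at h
      · rw [hx] at h; simp at h; exact h.symm
    rw [hC, hx, hx1]; rfl
  refine ⟨hAeq, ?_⟩
  rw [hAeq] at hsum
  have h23 : ({0,1} : Multiset ℝ) + ({2,3} : Multiset ℝ) = ({0,1,2,3} : Multiset ℝ) := rfl
  exact add_left_cancel (hsum.trans h23.symm)



/-- For the multiset `P = {0, 1, 2, 3}` of points on the real
line, the bisection `A = {0, 3}`, `B = {1, 2}` has cut value `6`, while every
bisection `(A', B')` induced by a single geometric cut (every element of `A'`
at most every element of `B'`) has cut value `8`; hence the bisection
`({0,3}, {1,2})` has strictly smaller cut value than every bisection induced by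
a single geometric cut, so single geometric cuts are not always sufficient to
generate minimum bisections on the real line. -/
theorem statement13 :
    -- (A, B) = ({0,3}, {1,2}) is a bisection of P = {0,1,2,3} ...
    ({0, 3} : Multiset ℝ) + ({1, 2} : Multiset ℝ) = ({0, 1, 2, 3} : Multiset ℝ) ∧
    Multiset.card ({0, 3} : Multiset ℝ) = Multiset.card ({1, 2} : Multiset ℝ) ∧
    -- ... with cut value 6:
    ((({0, 3} : Multiset ℝ) ×ˢ ({1, 2} : Multiset ℝ)).map
        fun ab => |ab.1 - ab.2|).sum = 6 ∧
    -- every bisection induced by a single geometric cut has cut value 8: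
    (∀ A' B' : Multiset ℝ, A' + B' = ({0, 1, 2, 3} : Multiset ℝ) →
      Multiset.card A' = Multiset.card B' →
      (∀ a ∈ A', ∀ b ∈ B', a ≤ b) →
      ((A' ×ˢ B').map fun ab => |ab.1 - ab.2|).sum = 8) ∧
    -- hence ({0,3},{1,2}) beats every single geometric cut bisection:
    (∀ A' B' : Multiset ℝ, A' + B' = ({0, 1, 2, 3} : Multiset ℝ) →
      Multiset.card A' = Multiset.card B' →
      (∀ a ∈ A', ∀ b ∈ B', a ≤ b) →
      ((({0, 3} : Multiset ℝ) ×ˢ ({1, 2} : Multiset ℝ)).map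
          fun ab => |ab.1 - ab.2|).sum <
        ((A' ×ˢ B').map fun ab => |ab.1 - ab.2|).sum) := by

  have hval8 : ∀ A' B' : Multiset ℝ, A' + B' = ({0, 1, 2, 3} : Multiset ℝ) →
      Multiset.card A' = Multiset.card B' →
      (∀ a ∈ A', ∀ b ∈ B', a ≤ b) →
      ((A' ×ˢ B').map fun ab => |ab.1 - ab.2|).sum = 8 := by
    intro A' B' hsum hcard hle
    obtain ⟨hA, hB⟩ := geom_cut A' B' hsum hcard hle
    subst hA hB
    simp [Multiset.insert_eq_cons, Multiset.cons_product]
    norm_num [abs]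
  have hval6 : ((({0, 3} : Multiset ℝ) ×ˢ ({1, 2} : Multiset ℝ)).map
        fun ab => |ab.1 - ab.2|).sum = 6 := by
    simp [Multiset.insert_eq_cons, Multiset.cons_product]
    norm_num [abs]
  refine ⟨by
    simp only [Multiset.insert_eq_cons, Multiset.cons_add, Multiset.singleton_add]
    rw [Multiset.cons_swap 3 1, ← Multiset.cons_zero (2:ℝ), Multiset.cons_swap 3 2, Multiset.cons_zero], rfl, hval6, hval8, ?_⟩
  intro A' B' hsum hcard hle
  rw [hval8 A' B' hsum hcard hle, hval6]
  norm_num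
end
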